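/- arXiv:0709.2233 — 3 statements merged into one kernel-verified Lean document; each statement's English description precedes it below -/
import Mathlib

section
/- Let {d_n} be a sequence of real random variables adapted to a filtration {F_n} such that E(d_n | F_{n−1}) = 0 a.s. and σ_n² := E(d_n² | F_{n−1}) < ∞ a.s. Assume there exists a constant M > 0 such that for all n ≥ 1 either E(|d_n|^k | F_{n−1}) ≤ (k!/2)·σ_n²·M^{k−2} a.s. for all integers k ≥ 3, or P(|d_n| ≤ M | F_{n−1}) = 1 a.s. Let A_n = Σ_{i=1}^n d_i, V_n² = Σ_{i=1}^n σ_i², with A_0 = V_0 = 0. Then for every λ with 0 ≤ λ < 1/M, the process {exp( λA_n − λ²V_n² / (2(1 − Mλ)) ), F_n}_{n≥0} is a supermartingale. -/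
open MeasureTheory Filter

lemma aux_exp_le (x : ℝ) : Real.exp x ≤ 1 + x + (Real.exp |x| - 1 - |x|) := by
  rcases le_or_gt 0 x with h | h
  · rw [abs_of_nonneg h]; linarith
  · rw [abs_of_neg h]
    have h1 : Real.sinh x ≤ x := by
      have := Real.self_le_sinh_iff.2 (neg_nonneg.2 h.le)
      rw [Real.sinh_neg] at this; linarith
    rw [Real.sinh_eq] at h1
    linarith

lemma aux_sum_eq (y : ℝ) (N : ℕ) :
    ∑ i ∈ Finset.range (N + 2), y ^ i / i.factorial = 1 + y +
      ∑ k ∈ Finset.range N, y ^ (k + 2) / (k + 2).factorial := by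
  induction N with
  | zero => simp [Finset.sum_range_succ]
  | succ n ih => rw [Finset.sum_range_succ, ih, Finset.sum_range_succ]; ring

lemma aux_sum_le {y : ℝ} (hy : 0 ≤ y) (N : ℕ) :
    ∑ k ∈ Finset.range N, y ^ (k + 2) / (k + 2).factorial ≤ Real.exp y - 1 - y := by
  have := Real.sum_le_exp_of_nonneg hy (N + 2)
  rw [aux_sum_eq] at this; linarith

lemma aux_tendsto (y : ℝ) :
    Tendsto (fun N => ∑ k ∈ Finset.range N, y ^ (k + 2) / (k + 2).factorial) atTop
      (nhds (Real.exp y - 1 - y)) := by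
  have h : HasSum (fun n : ℕ => y ^ n / n.factorial) (Real.exp y) := by
    rw [Real.exp_eq_exp_ℝ]
    exact NormedSpace.expSeries_div_hasSum_exp y
  have h2 := h.tendsto_sum_nat.comp (tendsto_add_atTop_nat 2)
  have h3 : (fun N => ∑ k ∈ Finset.range N, y ^ (k + 2) / (k + 2).factorial) =
      fun N => (∑ i ∈ Finset.range (N + 2), y ^ i / i.factorial) - 1 - y := by
    funext N; rw [aux_sum_eq]; ring
  rw [h3]
  exact (h2.sub_const 1).sub_const y

lemma aux_geom {r : ℝ} (h0 : 0 ≤ r) (h1 : r < 1) (N : ℕ) :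
    ∑ k ∈ Finset.range N, r ^ k ≤ 1 / (1 - r) := by
  rw [le_div_iff₀ (by linarith)]
  have := geom_sum_mul r N
  have h2 : r ^ N ≥ 0 := pow_nonneg h0 N
  nlinarith

lemma aux_ae_le_of_forall_setIntegral_le {Ω : Type*} {m m0 : MeasurableSpace Ω}
    {μ : Measure Ω} (hm : m ≤ m0) [IsFiniteMeasure μ]
    {f g : Ω → ℝ} (hfmeas : StronglyMeasurable[m] f) (hgmeas : StronglyMeasurable[m] g)
    (hf : Integrable f μ) (hg : Integrable g μ)
    (h : ∀ s, MeasurableSet[m] s → ∫ x in s, f x ∂μ ≤ ∫ x in s, g x ∂μ) : f ≤ᵐ[μ] g := by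
  have hft := hf.trim hm hfmeas
  have hgt := hg.trim hm hgmeas
  refine ae_le_of_ae_le_trim (hm := hm) ?_
  refine ae_le_of_forall_setIntegral_le hft hgt fun s hs _ => ?_
  rw [← setIntegral_trim hm hfmeas hs, ← setIntegral_trim hm hgmeas hs]
  exact h s hs

lemma aux_key {Ω : Type*} {m : MeasurableSpace Ω} {m0 : MeasurableSpace Ω} (hm : m ≤ m0)
    {μ : Measure Ω} [IsProbabilityMeasure μ]
    {f : Ω → ℝ} (hf1 : Integrable f μ) (hf2 : Integrable (fun ω => f ω ^ 2) μ)
    (h0 : μ[f|m] =ᵐ[μ] 0)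
    {M l : ℝ} (hM : 0 < M) (hl0 : 0 ≤ l) (hlM : l * M < 1)
    (hmom : ∀ k : ℕ, 3 ≤ k → Integrable (fun ω => |f ω| ^ k) μ ∧
      μ[fun ω => |f ω| ^ k|m] ≤ᵐ[μ] fun ω => (k.factorial : ℝ) / 2 *
        (μ[fun ω' => f ω' ^ 2|m]) ω * M ^ (k - 2)) :
    Integrable (fun ω => Real.exp (l * f ω)) μ ∧
    μ[fun ω => Real.exp (l * f ω)|m] ≤ᵐ[μ]
      fun ω => Real.exp (l ^ 2 / (2 * (1 - M * l)) * (μ[fun ω' => f ω' ^ 2|m]) ω) := by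
  have hμm : SigmaFinite (μ.trim hm) := by infer_instance
  set σ2 : Ω → ℝ := μ[fun ω' => f ω' ^ 2|m] with hσ2
  have hσ2int : Integrable σ2 μ := integrable_condExp
  have hσ2meas : StronglyMeasurable[m] σ2 := stronglyMeasurable_condExp
  have hσ2nn : 0 ≤ᵐ[μ] σ2 := condExp_nonneg (Eventually.of_forall fun ω => sq_nonneg _)
  -- unified moments for exponents j+2
  have hjmom : ∀ j : ℕ, Integrable (fun ω => |f ω| ^ (j + 2)) μ ∧
      μ[fun ω => |f ω| ^ (j + 2)|m] ≤ᵐ[μ]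
        fun ω => ((j + 2).factorial : ℝ) / 2 * σ2 ω * M ^ j := by
    intro j
    rcases Nat.eq_zero_or_pos j with rfl | hj
    · have he : (fun ω => |f ω| ^ (0 + 2)) = fun ω => f ω ^ 2 := by
        funext ω; simp [sq_abs]
      rw [he]
      refine ⟨hf2, ?_⟩
      filter_upwards [hσ2nn] with ω h
      simp only [pow_zero, mul_one, Nat.factorial]
      norm_num
      exact le_rfl
    · have h3 : 3 ≤ j + 2 := by omega
      have := hmom (j + 2) h3
      simpa using this
  set c' : ℝ := l ^ 2 / (2 * (1 - M * l)) with hc'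
  have hMl : 0 ≤ l * M := mul_nonneg hl0 hM.le
  have h1Ml : (0:ℝ) < 1 - M * l := by nlinarith
  have hc'nn : 0 ≤ c' := by positivity
  -- partial sums
  set S : ℕ → Ω → ℝ := fun N ω => ∑ k ∈ Finset.range N,
    l ^ (k + 2) / ((k + 2).factorial : ℝ) * |f ω| ^ (k + 2) with hS
  have hSeq : ∀ N ω, S N ω = ∑ k ∈ Finset.range N,
      (l * |f ω|) ^ (k + 2) / ((k + 2).factorial : ℝ) := by
    intro N ω
    refine Finset.sum_congr rfl fun k _ => ?_
    rw [mul_pow]; ring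
  have hSint : ∀ N, Integrable (S N) μ := by
    intro N
    exact integrable_finset_sum _ fun k _ => ((hjmom k).1.const_mul _)
  have hSnn : ∀ N ω, 0 ≤ S N ω := by
    intro N ω
    refine Finset.sum_nonneg fun k _ => ?_
    have : (0:ℝ) ≤ l ^ (k + 2) / ((k + 2).factorial : ℝ) := by positivity
    positivity
  set h : Ω → ℝ := fun ω => Real.exp (l * |f ω|) - 1 - l * |f ω| with hh
  have hSle : ∀ N ω, S N ω ≤ h ω := by
    intro N ω
    rw [hSeq]
    exact aux_sum_le (by positivity) N
  have hSmono : ∀ ω, Monotone fun N => S N ω := by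
    intro ω
    apply monotone_nat_of_le_succ
    intro n
    rw [hS]
    simp only
    rw [Finset.sum_range_succ]
    have : (0:ℝ) ≤ l ^ (n + 2) / ((n + 2).factorial : ℝ) * |f ω| ^ (n + 2) := by positivity
    linarith
  have hStend : ∀ ω, Tendsto (fun N => S N ω) atTop (nhds (h ω)) := by
    intro ω
    have := aux_tendsto (l * |f ω|)
    simp only [← hSeq] at this
    exact this
  have hhnn : ∀ ω, 0 ≤ h ω := by
    intro ω
    have := Real.add_one_le_exp (l * |f ω|)
    simp only [hh]; linarith
  have hhmeas : AEStronglyMeasurable h μ := by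
    have habs : AEStronglyMeasurable (fun ω => |f ω|) μ := hf1.1.norm.congr
      (Eventually.of_forall fun ω => (Real.norm_eq_abs _))
    exact ((Real.continuous_exp.comp_aestronglyMeasurable (habs.const_mul l)).sub
      aestronglyMeasurable_const).sub (habs.const_mul l)
  -- the key set-integral bound
  have hsetbd : ∀ s, MeasurableSet[m] s → ∀ N,
      ∫ ω in s, S N ω ∂μ ≤ ∫ ω in s, c' * σ2 ω ∂μ := by
    intro s hs N
    have hsm : MeasurableSet[m0] s := hm s hs
    have hterm : ∀ k : ℕ, ∫ ω in s, |f ω| ^ (k + 2) ∂μ ≤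
        ((k + 2).factorial : ℝ) / 2 * M ^ k * ∫ ω in s, σ2 ω ∂μ := by
      intro k
      have h1 : ∫ ω in s, |f ω| ^ (k + 2) ∂μ = ∫ ω in s, (μ[fun ω => |f ω| ^ (k + 2)|m]) ω ∂μ :=
        (setIntegral_condExp hm (hjmom k).1 hs).symm
      rw [h1]
      have h2 : ∫ ω in s, (μ[fun ω => |f ω| ^ (k + 2)|m]) ω ∂μ ≤
          ∫ ω in s, ((k + 2).factorial : ℝ) / 2 * σ2 ω * M ^ k ∂μ := by
        refine setIntegral_mono_ae integrable_condExp.integrableOn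
          ((hσ2int.const_mul _).mul_const _).integrableOn (hjmom k).2
      rw [show (fun ω => ((k + 2).factorial : ℝ) / 2 * σ2 ω * M ^ k) =
        fun ω => (((k + 2).factorial : ℝ) / 2 * M ^ k) * σ2 ω by funext ω; ring] at h2
      rw [integral_const_mul] at h2
      linarith
    have hσsnn : 0 ≤ ∫ ω in s, σ2 ω ∂μ :=
      setIntegral_nonneg_ae hsm (hσ2nn.mono fun ω h _ => h)
    have hSN : ∫ ω in s, S N ω ∂μ = ∑ k ∈ Finset.range N,
        l ^ (k + 2) / ((k + 2).factorial : ℝ) * ∫ ω in s, |f ω| ^ (k + 2) ∂μ := by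
      rw [integral_finset_sum]
      · exact Finset.sum_congr rfl fun k _ => integral_const_mul _ _
      · exact fun k _ => ((hjmom k).1.const_mul _).integrableOn
    rw [hSN]
    have hbd : ∑ k ∈ Finset.range N,
        l ^ (k + 2) / ((k + 2).factorial : ℝ) * ∫ ω in s, |f ω| ^ (k + 2) ∂μ ≤
        ∑ k ∈ Finset.range N,
          l ^ 2 / 2 * (l * M) ^ k * ∫ ω in s, σ2 ω ∂μ := by
      refine Finset.sum_le_sum fun k _ => ?_
      have hfac : (0:ℝ) < ((k + 2).factorial : ℝ) := by positivity
      calc l ^ (k + 2) / ((k + 2).factorial : ℝ) * ∫ ω in s, |f ω| ^ (k + 2) ∂μ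
          ≤ l ^ (k + 2) / ((k + 2).factorial : ℝ) *
            (((k + 2).factorial : ℝ) / 2 * M ^ k * ∫ ω in s, σ2 ω ∂μ) := by
            refine mul_le_mul_of_nonneg_left (hterm k) (by positivity)
        _ = l ^ 2 / 2 * (l * M) ^ k * ∫ ω in s, σ2 ω ∂μ := by
            field_simp
            ring
    refine hbd.trans ?_
    rw [← Finset.sum_mul, ← Finset.mul_sum]
    have hgeom := aux_geom hMl (by nlinarith) N
    calc (l ^ 2 / 2 * ∑ k ∈ Finset.range N, (l * M) ^ k) * ∫ ω in s, σ2 ω ∂μ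
        ≤ (l ^ 2 / 2 * (1 / (1 - l * M))) * ∫ ω in s, σ2 ω ∂μ :=
          mul_le_mul_of_nonneg_right (mul_le_mul_of_nonneg_left hgeom (by positivity)) hσsnn
      _ = ∫ ω in s, c' * σ2 ω ∂μ := by
          rw [integral_const_mul, hc', mul_comm M l]
          have hne : (1:ℝ) - l * M ≠ 0 := by nlinarith
          field_simp
  -- integrability of h
  have hhint : Integrable h μ := by
    refine ⟨hhmeas, ?_⟩
    rw [hasFiniteIntegral_iff_ofReal (Eventually.of_forall hhnn)]
    have hmct := lintegral_tendsto_of_tendsto_of_monotone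
      (f := fun N ω => ENNReal.ofReal (S N ω)) (F := fun ω => ENNReal.ofReal (h ω))
      (fun N => ((hSint N).1.aemeasurable.ennreal_ofReal))
      (Eventually.of_forall fun ω N N' hNN' => ENNReal.ofReal_le_ofReal (hSmono ω hNN'))
      (Eventually.of_forall fun ω => (ENNReal.continuous_ofReal.tendsto _).comp (hStend ω))
    have hub : ∀ N, ∫⁻ ω, ENNReal.ofReal (S N ω) ∂μ ≤
        ENNReal.ofReal (∫ ω, c' * σ2 ω ∂μ) := by
      intro N
      rw [← ofReal_integral_eq_lintegral_ofReal (hSint N) (Eventually.of_forall (hSnn N))]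
      refine ENNReal.ofReal_le_ofReal ?_
      have := hsetbd Set.univ MeasurableSet.univ N
      simpa [Measure.restrict_univ] using this
    have := le_of_tendsto hmct (Eventually.of_forall hub)
    exact lt_of_le_of_lt this ENNReal.ofReal_lt_top
  -- integrability of exp(l|f|) and exp(lf)
  have heabs : Integrable (fun ω => Real.exp (l * |f ω|)) μ := by
    have : (fun ω => Real.exp (l * |f ω|)) = fun ω => h ω + 1 + l * |f ω| := by
      funext ω; simp [hh]; ring
    rw [this]
    exact (hhint.add (integrable_const 1)).add ((hf1.abs).const_mul l)
  have hexpint : Integrable (fun ω => Real.exp (l * f ω)) μ := by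
    refine heabs.mono (Real.continuous_exp.comp_aestronglyMeasurable (hf1.1.const_mul l)) ?_
    refine Eventually.of_forall fun ω => ?_
    rw [Real.norm_eq_abs, Real.norm_eq_abs, abs_of_pos (Real.exp_pos _),
      abs_of_pos (Real.exp_pos _)]
    exact Real.exp_le_exp.2 (by
      have : l * f ω ≤ l * |f ω| := mul_le_mul_of_nonneg_left (le_abs_self _) hl0
      exact this)
  refine ⟨hexpint, ?_⟩
  -- condexp bound on h
  have hcondh : μ[h|m] ≤ᵐ[μ] fun ω => c' * σ2 ω := by
    refine aux_ae_le_of_forall_setIntegral_le hm stronglyMeasurable_condExp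
      (hσ2meas.const_mul _) integrable_condExp (hσ2int.const_mul _) fun s hs => ?_
    rw [setIntegral_condExp hm hhint hs]
    have hsm : MeasurableSet[m0] s := hm s hs
    have htend : Tendsto (fun N => ∫ ω in s, S N ω ∂μ) atTop (nhds (∫ ω in s, h ω ∂μ)) := by
      refine integral_tendsto_of_tendsto_of_monotone (fun N => (hSint N).integrableOn)
        hhint.integrableOn ?_ ?_
      · exact Eventually.of_forall fun ω => hSmono ω
      · exact Eventually.of_forall fun ω => hStend ω
    exact le_of_tendsto htend (Eventually.of_forall fun N => hsetbd s hs N)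
  -- put it together
  have hptwise : (fun ω => Real.exp (l * f ω)) ≤ᵐ[μ]
      fun ω => 1 + l * f ω + h ω := by
    refine Eventually.of_forall fun ω => ?_
    have := aux_exp_le (l * f ω)
    rwa [abs_mul, abs_of_nonneg hl0] at this
  have hint1f : Integrable (fun ω => 1 + l * f ω + h ω) μ :=
    ((integrable_const 1).add (hf1.const_mul l)).add hhint
  have hmono : μ[fun ω => Real.exp (l * f ω)|m] ≤ᵐ[μ]
      μ[fun ω => 1 + l * f ω + h ω|m] := condExp_mono hexpint hint1f hptwise
  have hsplit : μ[fun ω => 1 + l * f ω + h ω|m] =ᵐ[μ]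
      fun ω => 1 + l * (μ[f|m]) ω + (μ[h|m]) ω := by
    have e1 : μ[fun ω => 1 + l * f ω + h ω|m] =ᵐ[μ]
        μ[fun ω => 1 + l * f ω|m] + μ[h|m] :=
      condExp_add ((integrable_const 1).add (hf1.const_mul l)) hhint m
    have e2 : μ[fun ω => 1 + l * f ω|m] =ᵐ[μ]
        μ[fun _ => (1:ℝ)|m] + μ[fun ω => l * f ω|m] :=
      condExp_add (integrable_const 1) (hf1.const_mul l) m
    have e3 : μ[fun _ => (1:ℝ)|m] = fun _ => (1:ℝ) := condExp_const hm 1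
    have e4 : μ[fun ω => l * f ω|m] =ᵐ[μ] fun ω => l * (μ[f|m]) ω := by
      have := condExp_smul (μ := μ) (m := m) l f
      exact this
    filter_upwards [e1, e2, e4] with ω h1 h2 h4
    simp only [Pi.add_apply] at h1 h2 ⊢
    rw [h1, h2, e3, h4]
  refine (hmono.trans hsplit.le).trans ?_
  filter_upwards [h0, hcondh] with ω hz hc
  rw [hz]
  simp only [Pi.zero_apply, mul_zero, add_zero]
  calc 1 + (μ[h|m]) ω ≤ 1 + c' * σ2 ω := by linarith
    _ ≤ Real.exp (c' * σ2 ω) := by linarith [Real.add_one_le_exp (c' * σ2 ω)]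

/-- **Lemma A.6.** If `{d_n}` is adapted with `E(d_n|F_{n−1}) = 0`,
`σ_n² = E(d_n²|F_{n−1}) < ∞`, and for some `M > 0`, for every `n` either
`E(|d_n|^k|F_{n−1}) ≤ (k!/2)σ_n²M^{k−2}` a.s. for all `k ≥ 3`, or
`P(|d_n| ≤ M|F_{n−1}) = 1` a.s., then with `A_n = Σ_{i≤n} d_i`, `V_n² = Σ_{i≤n} σ_i²`,
for every `0 ≤ λ < 1/M` the process
`{exp(λA_n − λ²V_n²/(2(1 − Mλ))), F_n}` is a supermartingale. -/
theorem stmt16 {Ω : Type*} {m0 : MeasurableSpace Ω} (μ : Measure Ω) [IsProbabilityMeasure μ]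
    (F : Filtration ℕ m0) (M : ℝ) (hM : 0 < M)
    (d : ℕ → Ω → ℝ) (hadapt : Adapted F d)
    (hint : ∀ i, Integrable (d i) μ)
    (hint2 : ∀ i, Integrable (fun ω => d i ω ^ 2) μ)
    (hcond : ∀ i, 1 ≤ i → μ[d i | F (i - 1)] =ᵐ[μ] 0)
    (hmom : ∀ n, 1 ≤ n →
      (∀ k : ℕ, 3 ≤ k →
        Integrable (fun ω => |d n ω| ^ k) μ ∧
        μ[fun ω => |d n ω| ^ k | F (n - 1)] ≤ᵐ[μ]
          fun ω => (k.factorial : ℝ) / 2 *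
            (μ[fun ω' => d n ω' ^ 2 | F (n - 1)]) ω * M ^ (k - 2)) ∨
      μ[Set.indicator {ω | |d n ω| ≤ M} (fun _ => (1 : ℝ)) | F (n - 1)] =ᵐ[μ]
        fun _ => (1 : ℝ))
    (l : ℝ) (hl0 : 0 ≤ l) (hl : l < 1 / M) :
    Supermartingale
      (fun n ω => Real.exp (l * ∑ i ∈ Finset.Icc 1 n, d i ω -
        l ^ 2 * (∑ i ∈ Finset.Icc 1 n, (μ[fun ω' => d i ω' ^ 2 | F (i - 1)]) ω) /
          (2 * (1 - M * l)))) F μ := by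
  have hMl : M * l < 1 := by
    rw [lt_div_iff₀ hM] at hl; linarith
  have hlM : l * M < 1 := by rw [mul_comm]; exact hMl
  have h1Ml : (0:ℝ) < 1 - M * l := by linarith
  -- notation
  set X : ℕ → Ω → ℝ := fun n ω => Real.exp (l * ∑ i ∈ Finset.Icc 1 n, d i ω -
        l ^ 2 * (∑ i ∈ Finset.Icc 1 n, (μ[fun ω' => d i ω' ^ 2 | F (i - 1)]) ω) /
          (2 * (1 - M * l))) with hX
  set σ2 : ℕ → Ω → ℝ := fun i => μ[fun ω' => d i ω' ^ 2 | F (i - 1)] with hσ2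
  set c' : ℝ := l ^ 2 / (2 * (1 - M * l)) with hc'
  -- unified moment bounds
  have hdm : ∀ n : ℕ, Measurable[m0] (d n) := fun n =>
    (hadapt n).mono (F.le n) le_rfl
  have hmom' : ∀ n, 1 ≤ n → ∀ k : ℕ, 3 ≤ k → Integrable (fun ω => |d n ω| ^ k) μ ∧
      μ[fun ω => |d n ω| ^ k | F (n - 1)] ≤ᵐ[μ]
        fun ω => (k.factorial : ℝ) / 2 * σ2 n ω * M ^ (k - 2) := by
    intro n hn
    rcases hmom n hn with hc | hind
    · exact hc
    · -- case 2: |d n| ≤ M a.s.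
      have hs : MeasurableSet[m0] {ω | |d n ω| ≤ M} :=
        measurableSet_le (hdm n).abs measurable_const
      have hindint : Integrable (Set.indicator {ω | |d n ω| ≤ M} (fun _ => (1:ℝ))) μ :=
        (integrable_const (1:ℝ)).indicator hs
      have hμs : (μ {ω | |d n ω| ≤ M}).toReal = 1 := by
        have h1 : ∫ ω, (μ[Set.indicator {ω | |d n ω| ≤ M} (fun _ => (1:ℝ)) | F (n-1)]) ω ∂μ
            = ∫ ω, Set.indicator {ω | |d n ω| ≤ M} (fun _ => (1:ℝ)) ω ∂μ :=
          integral_condExp (F.le (n-1))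
        have h2 : ∫ ω, (μ[Set.indicator {ω | |d n ω| ≤ M} (fun _ => (1:ℝ)) | F (n-1)]) ω ∂μ
            = ∫ _ω, (1:ℝ) ∂μ := integral_congr_ae hind
        rw [h2] at h1
        rw [integral_indicator_const _ hs] at h1
        simp at h1 ⊢
        exact h1.symm
      have hae : ∀ᵐ ω ∂μ, |d n ω| ≤ M := by
        have : μ {ω | |d n ω| ≤ M} = 1 := by
          have hne : μ {ω | |d n ω| ≤ M} ≠ ⊤ := measure_ne_top μ _
          rwa [← ENNReal.toReal_eq_one_iff] 
        have hcompl : μ {ω | |d n ω| ≤ M}ᶜ = 0 := by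
          rw [measure_compl hs (measure_ne_top μ _), this, measure_univ, tsub_self]
        exact (ae_iff).2 hcompl
      intro k hk
      have hptw : ∀ᵐ ω ∂μ, |d n ω| ^ k ≤ M ^ (k - 2) * d n ω ^ 2 := by
        filter_upwards [hae] with ω hω
        calc |d n ω| ^ k = |d n ω| ^ (k - 2) * |d n ω| ^ 2 := by
              rw [← pow_add]; congr 1; omega
          _ ≤ M ^ (k - 2) * |d n ω| ^ 2 :=
              mul_le_mul_of_nonneg_right (pow_le_pow_left₀ (abs_nonneg _) hω _) (sq_nonneg _)
          _ = M ^ (k - 2) * d n ω ^ 2 := by rw [sq_abs]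
      have hki : Integrable (fun ω => |d n ω| ^ k) μ := by
        refine Integrable.mono ((hint2 n).const_mul (M ^ (k - 2)))
          (((hdm n).abs.pow_const k).aestronglyMeasurable) ?_
        filter_upwards [hptw] with ω hω
        rw [Real.norm_eq_abs, Real.norm_eq_abs, abs_of_nonneg (by positivity)]
        refine hω.trans (le_abs_self _)
      refine ⟨hki, ?_⟩
      have hmono := condExp_mono (μ := μ) (m := F (n-1)) hki
        ((hint2 n).const_mul (M ^ (k - 2))) hptw
      have hsm : μ[fun ω => M ^ (k - 2) * d n ω ^ 2|F (n-1)] =ᵐ[μ]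
          fun ω => M ^ (k - 2) * σ2 n ω := by
        have := condExp_smul (μ := μ) (m := F (n-1)) (M ^ (k - 2)) (fun ω => d n ω ^ 2)
        exact this
      have hσ2nn : 0 ≤ᵐ[μ] σ2 n :=
        condExp_nonneg (Eventually.of_forall fun ω => sq_nonneg _)
      refine (hmono.trans hsm.le).trans ?_
      filter_upwards [hσ2nn] with ω hω
      have hfac : (2:ℝ) ≤ (k.factorial : ℝ) := by
        have h2 : 2 ≤ k.factorial :=
          le_trans (by decide : 2 ≤ Nat.factorial 3) (Nat.factorial_le hk)
        exact_mod_cast h2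
      have hM2 : (0:ℝ) ≤ M ^ (k - 2) := by positivity
      have hσb : σ2 n ω ≤ (k.factorial : ℝ) / 2 * σ2 n ω := by
        nlinarith [mul_nonneg (by linarith : (0:ℝ) ≤ (k.factorial:ℝ) / 2 - 1) hω]
      calc M ^ (k - 2) * σ2 n ω
          ≤ M ^ (k - 2) * ((k.factorial : ℝ) / 2 * σ2 n ω) :=
            mul_le_mul_of_nonneg_left hσb hM2
        _ = (k.factorial : ℝ) / 2 * σ2 n ω * M ^ (k - 2) := by ring
  -- key one-step bound
  have hkey : ∀ n : ℕ, Integrable (fun ω => Real.exp (l * d (n+1) ω)) μ ∧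
      μ[fun ω => Real.exp (l * d (n+1) ω)|F n] ≤ᵐ[μ]
        fun ω => Real.exp (c' * σ2 (n+1) ω) := by
    intro n
    exact aux_key (F.le n) (hint (n+1)) (hint2 (n+1)) (hcond (n+1) (by omega))
      hM hl0 hlM (hmom' (n+1) (by omega))
  -- strong measurability
  have hZmeas : ∀ n : ℕ, StronglyMeasurable[F n]
      (fun ω => Real.exp (l * ∑ i ∈ Finset.Icc 1 n, d i ω -
        l ^ 2 * (∑ i ∈ Finset.Icc 1 (n+1), σ2 i ω) / (2 * (1 - M * l)))) := by
    intro n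
    have hA : StronglyMeasurable[F n] (fun ω => ∑ i ∈ Finset.Icc 1 n, d i ω) :=
      Finset.stronglyMeasurable_fun_sum _ fun i hi =>
        (hadapt i).stronglyMeasurable.mono (F.mono (Finset.mem_Icc.1 hi).2)
    have hV : StronglyMeasurable[F n] (fun ω => ∑ i ∈ Finset.Icc 1 (n+1), σ2 i ω) :=
      Finset.stronglyMeasurable_fun_sum _ fun i hi => stronglyMeasurable_condExp.mono
        (F.mono (by have := (Finset.mem_Icc.1 hi).2; omega))
    exact Real.continuous_exp.comp_stronglyMeasurable
      ((hA.const_mul l).sub ((hV.const_mul (l ^ 2)).mul_const _))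
  have hadaptX : StronglyAdapted F X := by
    intro n
    have hA : StronglyMeasurable[F n] (fun ω => ∑ i ∈ Finset.Icc 1 n, d i ω) :=
      Finset.stronglyMeasurable_fun_sum _ fun i hi =>
        (hadapt i).stronglyMeasurable.mono (F.mono (Finset.mem_Icc.1 hi).2)
    have hV : StronglyMeasurable[F n] (fun ω => ∑ i ∈ Finset.Icc 1 n, σ2 i ω) :=
      Finset.stronglyMeasurable_fun_sum _ fun i hi => stronglyMeasurable_condExp.mono
        (F.mono (by have := (Finset.mem_Icc.1 hi).2; omega))
    exact Real.continuous_exp.comp_stronglyMeasurable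
      ((hA.const_mul l).sub ((hV.const_mul (l ^ 2)).mul_const _))
  -- splitting identities
  set Z : ℕ → Ω → ℝ := fun n ω => Real.exp (l * ∑ i ∈ Finset.Icc 1 n, d i ω -
        l ^ 2 * (∑ i ∈ Finset.Icc 1 (n+1), σ2 i ω) / (2 * (1 - M * l))) with hZ
  have hZnn : ∀ n ω, 0 ≤ Z n ω := fun n ω => (Real.exp_pos _).le
  have hXsplit : ∀ n ω, X (n+1) ω = Z n ω * Real.exp (l * d (n+1) ω) := by
    intro n ω
    rw [hX, hZ]
    simp only
    rw [← Real.exp_add]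
    congr 1
    rw [Finset.sum_Icc_succ_top (by omega : 1 ≤ n + 1) (fun i => d i ω)]
    ring
  have hXZ : ∀ n ω, X n ω = Z n ω * Real.exp (c' * σ2 (n+1) ω) := by
    intro n ω
    rw [hX, hZ]
    simp only
    rw [← Real.exp_add]
    congr 1
    rw [Finset.sum_Icc_succ_top (by omega : 1 ≤ n + 1) (fun i => σ2 i ω), hc']
    field_simp
    ring
  have hEe_nn : ∀ n : ℕ, 0 ≤ᵐ[μ] μ[fun ω => Real.exp (l * d (n+1) ω)|F n] :=
    fun n => condExp_nonneg (Eventually.of_forall fun ω => (Real.exp_pos _).le)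
  -- integrability by induction
  have hintX : ∀ n, Integrable (X n) μ := by
    intro n
    induction n with
    | zero =>
      have : X 0 = fun _ => (1:ℝ) := by
        funext ω; rw [hX]; simp
      rw [this]; exact integrable_const 1
    | succ n ih =>
      set W : ℕ → Ω → ℝ := fun c ω => min (Z n ω) c with hW
      have hWnn : ∀ c ω, 0 ≤ W c ω := fun c ω => le_min (hZnn n ω) (Nat.cast_nonneg c)
      have hWmeasF : ∀ c : ℕ, StronglyMeasurable[F n] (W c) := fun c =>
        ((continuous_id.min continuous_const).comp_stronglyMeasurable (hZmeas n) :
          StronglyMeasurable[F n] fun ω => min (Z n ω) (c : ℝ))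
      have hWmeas : ∀ c : ℕ, AEStronglyMeasurable (W c) μ := fun c =>
        ((hWmeasF c).mono (F.le n)).aestronglyMeasurable
      have hWbd : ∀ c : ℕ, ∀ ω, ‖W c ω‖ ≤ (c : ℝ) := by
        intro c ω
        rw [Real.norm_eq_abs, abs_of_nonneg (hWnn c ω)]
        exact min_le_right _ _
      have hWe_int : ∀ c : ℕ, Integrable (fun ω => W c ω * Real.exp (l * d (n+1) ω)) μ :=
        fun c => (hkey n).1.bdd_mul (hWmeas c) (Eventually.of_forall (hWbd c))
      have hWE_int : ∀ c : ℕ,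
          Integrable (fun ω => W c ω * (μ[fun ω => Real.exp (l * d (n+1) ω)|F n]) ω) μ :=
        fun c => integrable_condExp.bdd_mul (hWmeas c) (Eventually.of_forall (hWbd c))
      have hWle : ∀ c : ℕ, ∫ ω, W c ω * Real.exp (l * d (n+1) ω) ∂μ ≤ ∫ ω, X n ω ∂μ := by
        intro c
        have hpull : μ[fun ω => W c ω * Real.exp (l * d (n+1) ω)|F n] =ᵐ[μ]
            fun ω => W c ω * (μ[fun ω => Real.exp (l * d (n+1) ω)|F n]) ω := by
          exact condExp_mul_of_stronglyMeasurable_left (hWmeasF c) (hWe_int c) (hkey n).1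
        calc ∫ ω, W c ω * Real.exp (l * d (n+1) ω) ∂μ
            = ∫ ω, (μ[fun ω => W c ω * Real.exp (l * d (n+1) ω)|F n]) ω ∂μ :=
              (integral_condExp (F.le n)).symm
          _ = ∫ ω, W c ω * (μ[fun ω => Real.exp (l * d (n+1) ω)|F n]) ω ∂μ :=
              integral_congr_ae hpull
          _ ≤ ∫ ω, X n ω ∂μ := by
              refine integral_mono_ae (hWE_int c) ih ?_
              filter_upwards [(hkey n).2, hEe_nn n] with ω hb hnn
              rw [hXZ n ω]
              exact mul_le_mul (min_le_left _ _) hb hnn (hZnn n ω)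
      have hmono_c : ∀ ω, Monotone fun c : ℕ => W c ω * Real.exp (l * d (n+1) ω) := by
        intro ω c c' hcc
        have : W c ω ≤ W c' ω := by
          refine min_le_min le_rfl ?_
          exact_mod_cast hcc
        exact mul_le_mul_of_nonneg_right this (Real.exp_pos _).le
      have htend_c : ∀ ω, Tendsto (fun c : ℕ => W c ω * Real.exp (l * d (n+1) ω)) atTop
          (nhds (Z n ω * Real.exp (l * d (n+1) ω))) := by
        intro ω
        refine tendsto_atTop_of_eventually_const (i₀ := ⌈Z n ω⌉₊) fun c hc => ?_
        have : Z n ω ≤ (c : ℝ) := le_trans (Nat.le_ceil _) (by exact_mod_cast hc)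
        rw [hW]
        simp only [min_eq_left this]
      have hXe : X (n+1) = fun ω => Z n ω * Real.exp (l * d (n+1) ω) := funext (hXsplit n)
      have haesm : AEStronglyMeasurable (fun ω => Z n ω * Real.exp (l * d (n+1) ω)) μ :=
        (((hZmeas n).mono (F.le n)).aestronglyMeasurable).mul (hkey n).1.1
      rw [hXe]
      refine ⟨haesm, ?_⟩
      rw [hasFiniteIntegral_iff_ofReal (Eventually.of_forall fun ω =>
        mul_nonneg (hZnn n ω) (Real.exp_pos _).le)]
      have hmct := lintegral_tendsto_of_tendsto_of_monotone
        (f := fun c ω => ENNReal.ofReal (W c ω * Real.exp (l * d (n+1) ω)))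
        (F := fun ω => ENNReal.ofReal (Z n ω * Real.exp (l * d (n+1) ω)))
        (fun c => ((hWe_int c).1.aemeasurable.ennreal_ofReal))
        (Eventually.of_forall fun ω c c' hcc => ENNReal.ofReal_le_ofReal (hmono_c ω hcc))
        (Eventually.of_forall fun ω =>
          (ENNReal.continuous_ofReal.tendsto _).comp (htend_c ω))
      have hub : ∀ c : ℕ, ∫⁻ ω, ENNReal.ofReal (W c ω * Real.exp (l * d (n+1) ω)) ∂μ ≤
          ENNReal.ofReal (∫ ω, X n ω ∂μ) := by
        intro c
        rw [← ofReal_integral_eq_lintegral_ofReal (hWe_int c)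
          (Eventually.of_forall fun ω => mul_nonneg (hWnn c ω) (Real.exp_pos _).le)]
        exact ENNReal.ofReal_le_ofReal (hWle c)
      exact lt_of_le_of_lt (le_of_tendsto hmct (Eventually.of_forall hub))
        ENNReal.ofReal_lt_top
  -- conditional expectation step
  refine supermartingale_nat hadaptX hintX fun n => ?_
  have hXe : X (n+1) = fun ω => Z n ω * Real.exp (l * d (n+1) ω) := funext (hXsplit n)
  have hXint' : Integrable (fun ω => Z n ω * Real.exp (l * d (n+1) ω)) μ := by
    rw [← hXe]; exact hintX (n+1)
  have hpull : μ[fun ω => Z n ω * Real.exp (l * d (n+1) ω)|F n] =ᵐ[μ]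
      fun ω => Z n ω * (μ[fun ω => Real.exp (l * d (n+1) ω)|F n]) ω :=
    condExp_mul_of_stronglyMeasurable_left (hZmeas n) hXint' (hkey n).1
  rw [hXe]
  refine hpull.le.trans ?_
  filter_upwards [(hkey n).2, hEe_nn n] with ω hb _
  rw [hXZ n ω]
  exact mul_le_mul_of_nonneg_left hb (hZnn n ω)
end

section
/- Let {d_n} be a sequence of real random variables adapted to a filtration {F_n} such that E(d_n | F_{n−1}) ≤ 0 a.s. and d_n ≥ −M almost surely for all n, where M > 0 is a nonrandom constant. Let 0 < γ < 1 and C_γ = −(γ + log(1 − γ))/γ². Let A_n = Σ_{i=1}^n d_i, B_n² = 2C_γ·Σ_{i=1}^n d_i², with A_0 = B_0 = 0. Then for every λ with 0 ≤ λ ≤ γ/M, the process {exp(λA_n − λ²B_n²/2), F_n}_{n≥0} is a supermartingale. -/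
open MeasureTheory Filter

/-- Integral representation: for `y > -1`,
`y - log (1+y) = ∫ s in 0..1, s * y² / (1 + s*y)`. -/
lemma stmt17_int_id (y : ℝ) (hy : -1 < y) :
    y - Real.log (1 + y) = ∫ s in (0:ℝ)..1, s * y ^ 2 / (1 + s * y) := by
  have hpos : ∀ s ∈ Set.uIcc (0:ℝ) 1, 0 < 1 + s * y := by
    intro s hs
    rw [Set.uIcc_of_le zero_le_one] at hs
    obtain ⟨h0, h1⟩ := hs
    rcases le_or_gt 0 y with h | h
    · nlinarith
    · nlinarith
  have hderiv : ∀ s ∈ Set.uIcc (0:ℝ) 1,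
      HasDerivAt (fun t => y * t - Real.log (1 + t * y)) (s * y ^ 2 / (1 + s * y)) s := by
    intro s hs
    have h1 : HasDerivAt (fun t : ℝ => 1 + t * y) y s := by
      simpa using ((hasDerivAt_id s).mul_const y).const_add 1
    have h2 : HasDerivAt (fun t : ℝ => Real.log (1 + t * y)) (y / (1 + s * y)) s :=
      h1.log (ne_of_gt (hpos s hs))
    have h3 : HasDerivAt (fun t : ℝ => y * t) y s := by
      simpa using (hasDerivAt_id s).const_mul y
    have h4 := h3.sub h2
    refine h4.congr_deriv ?_
    have := ne_of_gt (hpos s hs)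
    rw [sub_eq_iff_eq_add, ← add_div, eq_div_iff this]
    ring
  have hcont : ContinuousOn (fun s : ℝ => s * y ^ 2 / (1 + s * y)) (Set.uIcc 0 1) := by
    apply ContinuousOn.div
    · fun_prop
    · fun_prop
    · intro s hs; exact ne_of_gt (hpos s hs)
  have h := intervalIntegral.integral_eq_sub_of_hasDerivAt hderiv hcont.intervalIntegrable
  rw [h]
  norm_num

/-- Key scalar inequality: for `0 < γ < 1` and `y ≥ -γ`,
`y - log(1+y) ≤ Cγ y²` where `Cγ = -(γ + log(1-γ))/γ²`. -/
lemma stmt17_key (γ : ℝ) (hγ0 : 0 < γ) (hγ1 : γ < 1) (y : ℝ) (hy : -γ ≤ y) :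
    y - Real.log (1 + y) ≤ -(γ + Real.log (1 - γ)) / γ ^ 2 * y ^ 2 := by
  have hy1 : (-1:ℝ) < y := by linarith
  have hγ' : (-1:ℝ) < -γ := by linarith
  have hγne : γ ≠ 0 := ne_of_gt hγ0
  have hDpos : ∀ s ∈ Set.Icc (0:ℝ) 1, 0 < 1 + s * (-γ) := by
    intro s hs
    obtain ⟨h0, h1⟩ := hs
    nlinarith
  have hcont1 : ContinuousOn (fun s : ℝ => s * y ^ 2 / (1 + s * y)) (Set.uIcc 0 1) := by
    apply ContinuousOn.div
    · fun_prop
    · fun_prop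
    · intro s hs
      rw [Set.uIcc_of_le zero_le_one] at hs
      obtain ⟨h0, h1⟩ := hs
      rcases le_or_gt 0 y with h | h
      · nlinarith
      · nlinarith
  have hcont2 : ContinuousOn (fun s : ℝ => s * y ^ 2 / (1 + s * (-γ))) (Set.uIcc 0 1) := by
    apply ContinuousOn.div
    · fun_prop
    · fun_prop
    · intro s hs
      rw [Set.uIcc_of_le zero_le_one] at hs
      exact ne_of_gt (hDpos s hs)
  have hmono : (∫ s in (0:ℝ)..1, s * y ^ 2 / (1 + s * y)) ≤
      ∫ s in (0:ℝ)..1, s * y ^ 2 / (1 + s * (-γ)) := by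
    apply intervalIntegral.integral_mono_on zero_le_one
      hcont1.intervalIntegrable hcont2.intervalIntegrable
    intro s hs
    obtain ⟨h0, h1⟩ := hs
    have hd2 : 0 < 1 + s * (-γ) := hDpos s ⟨h0, h1⟩
    have hd1 : 1 + s * (-γ) ≤ 1 + s * y := by nlinarith
    gcongr
  have heq : (∫ s in (0:ℝ)..1, s * y ^ 2 / (1 + s * (-γ))) =
      -(γ + Real.log (1 - γ)) / γ ^ 2 * y ^ 2 := by
    have h1 : (∫ s in (0:ℝ)..1, s * y ^ 2 / (1 + s * (-γ))) =
        ∫ s in (0:ℝ)..1, (y ^ 2 / γ ^ 2) * (s * (-γ) ^ 2 / (1 + s * (-γ))) := by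
      apply intervalIntegral.integral_congr
      intro s _
      show s * y ^ 2 / (1 + s * -γ) = y ^ 2 / γ ^ 2 * (s * (-γ) ^ 2 / (1 + s * -γ))
      rw [← mul_div_assoc]
      congr 1
      field_simp
    rw [h1, intervalIntegral.integral_const_mul, ← stmt17_int_id (-γ) hγ']
    have h2 : (1:ℝ) + -γ = 1 - γ := by ring
    rw [h2]
    field_simp
    ring
  calc y - Real.log (1 + y) = ∫ s in (0:ℝ)..1, s * y ^ 2 / (1 + s * y) := stmt17_int_id y hy1
    _ ≤ ∫ s in (0:ℝ)..1, s * y ^ 2 / (1 + s * (-γ)) := hmono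
    _ = -(γ + Real.log (1 - γ)) / γ ^ 2 * y ^ 2 := heq

/-- **Lemma A.7.** If `{d_n}` is adapted with `E(d_n|F_{n−1}) ≤ 0` and
`d_n ≥ −M` a.s. for a constant `M > 0`, and `0 < γ < 1`,
`C_γ = −(γ + log(1 − γ))/γ²`, `A_n = Σ_{i≤n} d_i`, `B_n² = 2C_γ Σ_{i≤n} d_i²`, then for
every `0 ≤ λ ≤ γ/M` the process `{exp(λA_n − λ²B_n²/2), F_n}` is a supermartingale. -/
theorem stmt17 {Ω : Type*} {m0 : MeasurableSpace Ω} (μ : Measure Ω) [IsProbabilityMeasure μ]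
    (F : Filtration ℕ m0) (M : ℝ) (hM : 0 < M)
    (γ : ℝ) (hγ0 : 0 < γ) (hγ1 : γ < 1)
    (d : ℕ → Ω → ℝ) (hadapt : Adapted F d)
    (hint : ∀ i, Integrable (d i) μ)
    (hcond : ∀ i, 1 ≤ i → μ[d i | F (i - 1)] ≤ᵐ[μ] 0)
    (hbd : ∀ i, ∀ᵐ ω ∂μ, -M ≤ d i ω)
    (l : ℝ) (hl0 : 0 ≤ l) (hl : l ≤ γ / M) :
    Supermartingale
      (fun n ω => Real.exp (l * ∑ i ∈ Finset.Icc 1 n, d i ω -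
        l ^ 2 * (2 * (-(γ + Real.log (1 - γ)) / γ ^ 2) *
          ∑ i ∈ Finset.Icc 1 n, d i ω ^ 2) / 2)) F μ := by
  classical
  set C : ℝ := -(γ + Real.log (1 - γ)) / γ ^ 2 with hCdef
  have hlog : Real.log (1 - γ) < -γ := by
    have h := Real.log_lt_sub_one_of_pos (x := 1 - γ) (by linarith) (by intro h; linarith)
    linarith
  have hC : 0 < C := by
    apply div_pos (by linarith) (by positivity)
  have hlM : l * M ≤ γ := by
    have h := mul_le_mul_of_nonneg_right hl hM.le
    rwa [div_mul_cancel₀ _ (ne_of_gt hM)] at h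
  -- pointwise upper bound on each exponent term
  have hterm_bd : ∀ x : ℝ, l * x - C * (l * x) ^ 2 ≤ 1 / (4 * C) := by
    intro x
    rw [le_div_iff₀ (by positivity : (0:ℝ) < 4 * C)]
    nlinarith [sq_nonneg (2 * C * (l * x) - 1)]
  -- rewrite the process as exp of a sum of terms
  have hfun : (fun n ω => Real.exp (l * ∑ i ∈ Finset.Icc 1 n, d i ω -
        l ^ 2 * (2 * C * ∑ i ∈ Finset.Icc 1 n, d i ω ^ 2) / 2))
      = fun n ω => Real.exp (∑ i ∈ Finset.Icc 1 n, (l * d i ω - C * (l * d i ω) ^ 2)) := by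
    funext n ω
    congr 1
    rw [Finset.sum_sub_distrib, ← Finset.mul_sum]
    have h2 : ∑ i ∈ Finset.Icc 1 n, C * (l * d i ω) ^ 2
        = l ^ 2 * C * ∑ i ∈ Finset.Icc 1 n, d i ω ^ 2 := by
      rw [Finset.mul_sum]
      exact Finset.sum_congr rfl fun i _ => by ring
    rw [h2]
    ring
  rw [hfun]
  set f : ℕ → Ω → ℝ :=
    fun n ω => Real.exp (∑ i ∈ Finset.Icc 1 n, (l * d i ω - C * (l * d i ω) ^ 2)) with hfdef
  have hmeas : ∀ n, StronglyMeasurable[F n] (f n) := by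
    intro n
    apply Real.continuous_exp.comp_stronglyMeasurable
    apply Finset.stronglyMeasurable_fun_sum
    intro i hi
    have hin : i ≤ n := (Finset.mem_Icc.mp hi).2
    have hdi : StronglyMeasurable[F n] (d i) := ((hadapt i).mono (F.mono hin) le_rfl).stronglyMeasurable
    exact (hdi.const_mul l).sub (((hdi.const_mul l).pow 2).const_mul C)
  have hf_nonneg : ∀ n ω, 0 ≤ f n ω := fun n ω => (Real.exp_pos _).le
  have hf_bd : ∀ n ω, ‖f n ω‖ ≤ Real.exp (n * (1 / (4 * C))) := by
    intro n ω
    rw [Real.norm_eq_abs, abs_of_nonneg (hf_nonneg n ω)]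
    apply Real.exp_le_exp.mpr
    calc ∑ i ∈ Finset.Icc 1 n, (l * d i ω - C * (l * d i ω) ^ 2)
        ≤ ∑ i ∈ Finset.Icc 1 n, 1 / (4 * C) :=
          Finset.sum_le_sum fun i _ => hterm_bd _
      _ = (Finset.Icc 1 n).card * (1 / (4 * C)) := by
          rw [Finset.sum_const, nsmul_eq_mul]
      _ ≤ n * (1 / (4 * C)) := by
          have : (Finset.Icc 1 n).card = n := by rw [Nat.card_Icc]; omega
          rw [this]
  have hintf : ∀ n, Integrable (f n) μ := by
    intro n
    apply Integrable.mono' (integrable_const (Real.exp (n * (1 / (4 * C)))))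
    · exact ((hmeas n).mono (F.le n)).aestronglyMeasurable
    · exact Eventually.of_forall (hf_bd n)
  apply supermartingale_nat (fun n => hmeas n) hintf
  intro n
  set G : Ω → ℝ := fun ω => Real.exp (l * d (n+1) ω - C * (l * d (n+1) ω) ^ 2) with hGdef
  have hsplit : f (n+1) = f n * G := by
    funext ω
    show Real.exp _ = Real.exp _ * Real.exp _
    rw [← Real.exp_add]
    congr 1
    rw [Finset.sum_Icc_succ_top (by omega : 1 ≤ n + 1)]
  have hG_bd : ∀ ω, ‖G ω‖ ≤ Real.exp (1 / (4 * C)) := by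
    intro ω
    rw [Real.norm_eq_abs, abs_of_nonneg (Real.exp_pos _).le]
    exact Real.exp_le_exp.mpr (hterm_bd _)
  have hG_meas : StronglyMeasurable (G) := by
    apply Real.continuous_exp.comp_stronglyMeasurable
    have hdm : StronglyMeasurable (d (n+1)) := ((hadapt (n+1)).mono (F.le (n+1)) le_rfl).stronglyMeasurable
    exact (hdm.const_mul l).sub (((hdm.const_mul l).pow 2).const_mul C)
  have hGint : Integrable G μ := by
    apply Integrable.mono' (integrable_const (Real.exp (1 / (4 * C))))
    · exact hG_meas.aestronglyMeasurable
    · exact Eventually.of_forall hG_bd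
  have hd1_int : Integrable (fun ω => 1 + l * d (n+1) ω) μ :=
    (integrable_const 1).add ((hint (n+1)).const_mul l)
  have hG_le : G ≤ᵐ[μ] fun ω => 1 + l * d (n+1) ω := by
    filter_upwards [hbd (n+1)] with ω hω
    set y : ℝ := l * d (n+1) ω with hy
    have hyγ : -γ ≤ y := by nlinarith
    have h1y : 0 < 1 + y := by linarith
    have hk := stmt17_key γ hγ0 hγ1 y hyγ
    calc G ω = Real.exp (y - C * y ^ 2) := rfl
      _ ≤ Real.exp (Real.log (1 + y)) := Real.exp_le_exp.mpr (by rw [hCdef]; linarith)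
      _ = 1 + y := Real.exp_log h1y
  have hmul : μ[f n * G | F n] =ᵐ[μ] f n * μ[G | F n] :=
    condExp_stronglyMeasurable_mul_of_bound (F.le n) (hmeas n) hGint
      (Real.exp (n * (1 / (4 * C)))) (Eventually.of_forall (hf_bd n))
  have hcond1 : μ[G | F n] ≤ᵐ[μ] 1 := by
    have h1 : μ[G | F n] ≤ᵐ[μ] μ[fun ω => 1 + l * d (n+1) ω | F n] :=
      condExp_mono hGint hd1_int hG_le
    have hfuneq : (fun ω => 1 + l * d (n+1) ω)
        = (fun _ : Ω => (1:ℝ)) + l • d (n+1) := by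
      funext ω; simp
    have hadd := condExp_add (μ := μ) (m := F n)
      (integrable_const (1:ℝ)) ((hint (n+1)).smul l)
    have hsmul := condExp_smul (μ := μ) (m := F n) l (d (n+1))
    have hd0 : μ[d (n+1) | F n] ≤ᵐ[μ] 0 := by
      have h := hcond (n+1) (by omega)
      simpa using h
    refine h1.trans ?_
    rw [hfuneq]
    filter_upwards [hadd, hsmul, hd0] with ω ha hs hd
    rw [ha]
    simp only [Pi.add_apply, Pi.one_apply]
    rw [condExp_const (F.le n)]
    have hs' : (μ[l • d (n+1) | F n]) ω = l * (μ[d (n+1) | F n]) ω := by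
      rw [hs]; simp
    rw [hs']
    have : l * (μ[d (n+1) | F n]) ω ≤ 0 :=
      mul_nonpos_of_nonneg_of_nonpos hl0 (by simpa using hd)
    simp only [Pi.one_apply]
    linarith
  rw [hsplit]
  refine hmul.le.trans ?_
  filter_upwards [hcond1] with ω hω
  have h := mul_le_mul_of_nonneg_left hω (hf_nonneg n ω)
  simpa using h
end

section
/- Let {F_n} be a filtration and let y_n be F_n-measurable real random variables. For γ ∈ (0,1) set C_γ = −(γ + log(1 − γ))/γ². Let γ_n with 0 ≤ γ_n < 1 and λ_n with 0 < λ_n ≤ 1/C_{γ_n} be F_{n−1}-measurable random variables, and let μ_n = E[ y_n·1{−γ_n ≤ y_n < λ_n} | F_{n−1} ]. Then the process exp( Σ_{i=1}^n ( y_i − μ_i − λ_i^{−1}·y_i² ) ), n ≥ 1, is a supermartingale whose expectation is ≤ 1. -/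
open MeasureTheory Filter


private lemma hasDerivAt_G {t : ℝ} (ht : t < 1) :
    HasDerivAt (fun s : ℝ => -Real.log (1 - s) - s) (1 / (1 - t) - 1) t := by
  have h1 : HasDerivAt (fun s : ℝ => (1 : ℝ) - s) (-1) t := by
    simpa using (hasDerivAt_id t).const_sub 1
  have h2 := (h1.log (by linarith)).neg
  have := h2.sub (hasDerivAt_id t)
  exact this.congr_deriv (by ring)

private lemma lemA {x : ℝ} (hx0 : 0 ≤ x) (hx1 : x < 1) :
    x + x ^ 2 / 2 ≤ -Real.log (1 - x) := by
  set p : ℝ → ℝ := fun s => -Real.log (1 - s) - s - s ^ 2 / 2 with hp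
  have hd : ∀ s : ℝ, s < 1 → HasDerivAt p (1 / (1 - s) - 1 - s) s := by
    intro s hs1
    exact (hasDerivAt_G hs1).sub (by simpa using ((hasDerivAt_pow 2 s).div_const 2))
  have key : MonotoneOn p (Set.Icc 0 x) := by
    apply monotoneOn_of_deriv_nonneg (convex_Icc 0 x)
    · exact fun s hs =>
        (hd s (lt_of_le_of_lt hs.2 hx1)).continuousAt.continuousWithinAt
    · intro s hs
      rw [interior_Icc] at hs
      exact (hd s (lt_of_lt_of_le hs.2 hx1.le)).differentiableAt.differentiableWithinAt
    · intro s hs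
      rw [interior_Icc] at hs
      have hs1 : s < 1 := lt_of_lt_of_le hs.2 hx1.le
      rw [(hd s hs1).deriv]
      have h1s : 0 < 1 - s := by linarith
      have hs0 : 0 < s := hs.1
      rw [sub_sub, le_sub_iff_add_le, zero_add, le_div_iff₀ h1s]
      nlinarith
  have h0 : p 0 = 0 := by simp [hp]
  have := key (Set.left_mem_Icc.2 hx0) (Set.right_mem_Icc.2 hx0) hx0
  rw [h0] at this
  simp only [hp] at this
  linarith

private lemma lemB {y : ℝ} (hy : 0 ≤ y) : y - Real.log (1 + y) ≤ y ^ 2 / 2 := by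
  set q : ℝ → ℝ := fun s => Real.log (1 + s) - s + s ^ 2 / 2 with hq
  have hd : ∀ s : ℝ, 0 < 1 + s → HasDerivAt q (1 / (1 + s) - 1 + s) s := by
    intro s hs1
    have h1 : HasDerivAt (fun t : ℝ => (1 : ℝ) + t) 1 s := by
      simpa using (hasDerivAt_id s).const_add 1
    have := ((h1.log hs1.ne').sub (hasDerivAt_id s)).add
      ((hasDerivAt_pow 2 s).div_const 2)
    exact this.congr_deriv (by norm_num)
  have key : MonotoneOn q (Set.Icc 0 y) := by
    apply monotoneOn_of_deriv_nonneg (convex_Icc 0 y)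
    · exact fun s hs => (hd s (by have := hs.1; linarith)).continuousAt.continuousWithinAt
    · intro s hs
      rw [interior_Icc] at hs
      exact (hd s (by have := hs.1; linarith)).differentiableAt.differentiableWithinAt
    · intro s hs
      rw [interior_Icc] at hs
      have hs0 : 0 < s := hs.1
      have hs1 : (0:ℝ) < 1 + s := by linarith
      rw [(hd s hs1).deriv]
      have h : 1 / (1 + s) - 1 + s = s ^ 2 / (1 + s) := by field_simp; ring
      rw [h]
      positivity
  have h0 : q 0 = 0 := by simp [hq]
  have := key (Set.left_mem_Icc.2 hy) (Set.right_mem_Icc.2 hy) hy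
  rw [h0] at this
  simp only [hq] at this
  linarith

private lemma lemC {g s : ℝ} (hg0 : 0 < g) (hg1 : g < 1) (hs0 : 0 ≤ s) (hsg : s ≤ g) :
    g ^ 2 * (-Real.log (1 - s) - s) ≤ s ^ 2 * (-Real.log (1 - g) - g) := by
  set A : ℝ := -Real.log (1 - g) - g with hA
  set Fn : ℝ → ℝ := fun t => t ^ 2 * A - g ^ 2 * (-Real.log (1 - t) - t) with hFn
  have hd : ∀ t : ℝ, t < 1 → HasDerivAt Fn (2 * t * A - g ^ 2 * (1 / (1 - t) - 1)) t := by
    intro t ht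
    have h1 : HasDerivAt (fun u : ℝ => u ^ 2 * A) (2 * t * A) t := by
      simpa [mul_comm] using (hasDerivAt_pow 2 t).mul_const A
    have h2 := (hasDerivAt_G ht).const_mul (g ^ 2)
    exact h1.sub h2
  -- rewrite the derivative in factored form
  have hderiv_eq : ∀ t : ℝ, t < 1 →
      2 * t * A - g ^ 2 * (1 / (1 - t) - 1) = t * (2 * A - g ^ 2 / (1 - t)) := by
    intro t ht
    have h1t : (1 : ℝ) - t ≠ 0 := by intro h; linarith [h]
    field_simp
    ring
  suffices h : 0 ≤ Fn s by
    simp only [hFn] at h; linarith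
  by_cases hτ : 0 ≤ 2 * A - g ^ 2 / (1 - s)
  · -- Fn monotone on [0, s]
    have key : MonotoneOn Fn (Set.Icc 0 s) := by
      apply monotoneOn_of_deriv_nonneg (convex_Icc 0 s)
      · exact fun t ht =>
          (hd t (by have := ht.2; linarith)).continuousAt.continuousWithinAt
      · intro t ht
        rw [interior_Icc] at ht
        exact (hd t (by have := ht.2; linarith)).differentiableAt.differentiableWithinAt
      · intro t ht
        rw [interior_Icc] at ht
        have ht1 : t < 1 := by have := ht.2; linarith
        rw [(hd t ht1).deriv, hderiv_eq t ht1]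
        have h1 : g ^ 2 / (1 - t) ≤ g ^ 2 / (1 - s) := by
          apply div_le_div_of_nonneg_left (by positivity) (by linarith) (by linarith [ht.2])
        have : 0 ≤ 2 * A - g ^ 2 / (1 - t) := by linarith
        have ht0 : 0 ≤ t := ht.1.le
        positivity
    have h0 : Fn 0 = 0 := by simp [hFn]
    have := key (Set.left_mem_Icc.2 hs0) (Set.right_mem_Icc.2 hs0) hs0
    rwa [h0] at this
  · -- Fn antitone on [s, g]
    push_neg at hτ
    have key : AntitoneOn Fn (Set.Icc s g) := by
      apply antitoneOn_of_deriv_nonpos (convex_Icc s g)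
      · exact fun t ht =>
          (hd t (by have := ht.2; linarith)).continuousAt.continuousWithinAt
      · intro t ht
        rw [interior_Icc] at ht
        exact (hd t (by have := ht.2; linarith)).differentiableAt.differentiableWithinAt
      · intro t ht
        rw [interior_Icc] at ht
        have ht1 : t < 1 := by have := ht.2; linarith
        rw [(hd t ht1).deriv, hderiv_eq t ht1]
        have h1 : g ^ 2 / (1 - s) ≤ g ^ 2 / (1 - t) := by
          apply div_le_div_of_nonneg_left (by positivity) (by linarith) (by linarith [ht.1])
        have hneg : 2 * A - g ^ 2 / (1 - t) ≤ 0 := by linarith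
        have ht0 : 0 ≤ t := le_trans hs0 ht.1.le
        exact mul_nonpos_of_nonneg_of_nonpos ht0 hneg
    have hg' : Fn g = 0 := by simp only [hFn]; ring
    have := key (Set.left_mem_Icc.2 hsg) (Set.right_mem_Icc.2 hsg) hsg
    rwa [hg'] at this

private lemma key_ineq {g l y : ℝ} (hg0 : 0 ≤ g) (hg1 : g < 1) (hl0 : 0 < l)
    (hl : l ≤ 1 / (-(g + Real.log (1 - g)) / g ^ 2)) :
    Real.exp (y - l⁻¹ * y ^ 2) ≤ 1 + (if -g ≤ y ∧ y < l then y else 0) := by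
  -- first, g must be positive
  have hgpos : 0 < g := by
    rcases hg0.lt_or_eq with h | h
    · exact h
    · exfalso; rw [← h] at hl; norm_num at hl; linarith
  set C : ℝ := -(g + Real.log (1 - g)) / g ^ 2 with hC
  have hnum : g ^ 2 / 2 ≤ -(g + Real.log (1 - g)) := by
    have := lemA hg0 hg1; linarith
  have hChalf : (1:ℝ)/2 ≤ C := by
    rw [hC, le_div_iff₀ (by positivity)]
    linarith
  have hCpos : 0 < C := by linarith
  have hCl : C ≤ l⁻¹ := by
    rw [le_div_iff₀ hCpos] at hl
    rw [inv_eq_one_div, le_div_iff₀ hl0]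
    nlinarith [hl]
  by_cases hmem : -g ≤ y ∧ y < l
  · rw [if_pos hmem]
    have h1y : (0:ℝ) < 1 + y := by linarith [hmem.1]
    have key : y - Real.log (1 + y) ≤ C * y ^ 2 := by
      rcases le_or_gt 0 y with hy0 | hy0
      · calc y - Real.log (1 + y) ≤ y ^ 2 / 2 := lemB hy0
          _ ≤ C * y ^ 2 := by nlinarith [sq_nonneg y]
      · have hs0 : 0 ≤ -y := by linarith
        have hsg : -y ≤ g := by linarith [hmem.1]
        have := lemC hgpos hg1 hs0 hsg
        have heq : -Real.log (1 - -y) - -y = y - Real.log (1 + y) := by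
          rw [sub_neg_eq_add]; ring
        rw [heq] at this
        have hg2 : (0:ℝ) < g ^ 2 := by positivity
        rw [hC]
        rw [div_mul_eq_mul_div, le_div_iff₀ hg2]
        nlinarith [this]
    calc Real.exp (y - l⁻¹ * y ^ 2) ≤ Real.exp (Real.log (1 + y)) := by
          apply Real.exp_le_exp.2
          have : C * y ^ 2 ≤ l⁻¹ * y ^ 2 := by nlinarith [sq_nonneg y]
          linarith
      _ = 1 + y := Real.exp_log h1y
  · rw [if_neg hmem]
    have : y - l⁻¹ * y ^ 2 ≤ 0 := by
      push_neg at hmem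
      rcases lt_or_ge y (-g) with h | h
      · have hy0 : y < 0 := by linarith
        have : 0 ≤ l⁻¹ * y ^ 2 := by positivity
        linarith
      · have hyl : l ≤ y := hmem h
        have : y ≤ l⁻¹ * y ^ 2 := by
          rw [← sub_nonneg]
          have : l⁻¹ * y ^ 2 - y = l⁻¹ * (y * (y - l)) := by field_simp
          rw [this]
          have hy0 : 0 ≤ y := le_trans hl0.le hyl
          have : 0 ≤ y - l := by linarith
          positivity
        linarith
    calc Real.exp (y - l⁻¹ * y ^ 2) ≤ Real.exp 0 := Real.exp_le_exp.2 this
      _ = 1 + 0 := by simp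

private lemma lam_le_two {g l : ℝ} (hg0 : 0 ≤ g) (hg1 : g < 1) (hl0 : 0 < l)
    (hl : l ≤ 1 / (-(g + Real.log (1 - g)) / g ^ 2)) : l ≤ 2 := by
  have hgpos : 0 < g := by
    rcases hg0.lt_or_eq with h | h
    · exact h
    · exfalso; rw [← h] at hl; norm_num at hl; linarith
  set C : ℝ := -(g + Real.log (1 - g)) / g ^ 2 with hC
  have hnum : g ^ 2 / 2 ≤ -(g + Real.log (1 - g)) := by
    have := lemA hg0 hg1; linarith
  have hChalf : (1:ℝ)/2 ≤ C := by
    rw [hC, le_div_iff₀ (by positivity)]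
    linarith
  have hCpos : 0 < C := by linarith
  have : 1 / C ≤ 2 := by
    rw [div_le_iff₀ hCpos]
    linarith
  linarith

/-- **Lemma A.8.** Let `y_n` be `F_n`-measurable, and for `γ ∈ (0,1)` let
`C_γ = −(γ + log(1 − γ))/γ²`.  Let `0 ≤ γ_n < 1` and `0 < λ_n ≤ 1/C_{γ_n}` be
`F_{n−1}`-measurable, and `μ_n = E[y_n 1{−γ_n ≤ y_n < λ_n} | F_{n−1}]`.  Then
`exp(Σ_{i≤n} (y_i − μ_i − λ_i⁻¹ y_i²))`, `n ≥ 1`, is a supermartingale with expectation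
`≤ 1`. -/
theorem stmt18 {Ω : Type*} {m0 : MeasurableSpace Ω} (μ : Measure Ω) [IsProbabilityMeasure μ]
    (F : Filtration ℕ m0) (y : ℕ → Ω → ℝ) (hy : Adapted F y)
    (γ lam : ℕ → Ω → ℝ)
    (hγmeas : ∀ n, 1 ≤ n → StronglyMeasurable[F (n - 1)] (γ n))
    (hlammeas : ∀ n, 1 ≤ n → StronglyMeasurable[F (n - 1)] (lam n))
    (hγ : ∀ n ω, 0 ≤ γ n ω ∧ γ n ω < 1)
    (hlam : ∀ n ω, 0 < lam n ω ∧
      lam n ω ≤ 1 / (-(γ n ω + Real.log (1 - γ n ω)) / γ n ω ^ 2)) :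
    Supermartingale
      (fun n ω => Real.exp (∑ i ∈ Finset.Icc 1 n,
        (y i ω -
          (μ[fun ω' => Set.indicator
              {ω'' | -γ i ω'' ≤ y i ω'' ∧ y i ω'' < lam i ω''} (y i) ω' | F (i - 1)]) ω -
          (lam i ω)⁻¹ * y i ω ^ 2))) F μ ∧
    ∫ ω, Real.exp (∑ i ∈ Finset.Icc 1 1,
        (y i ω -
          (μ[fun ω' => Set.indicator
              {ω'' | -γ i ω'' ≤ y i ω'' ∧ y i ω'' < lam i ω''} (y i) ω' | F (i - 1)]) ω -
          (lam i ω)⁻¹ * y i ω ^ 2)) ∂μ ≤ 1 := by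
  -- notations
  set ind : ℕ → Ω → ℝ := fun i =>
    Set.indicator {ω'' | -γ i ω'' ≤ y i ω'' ∧ y i ω'' < lam i ω''} (y i) with hind
  set m : ℕ → Ω → ℝ := fun i => μ[fun ω' => ind i ω' | F (i - 1)] with hm
  set f : ℕ → Ω → ℝ := fun n ω => Real.exp (∑ i ∈ Finset.Icc 1 n,
    (y i ω - m i ω - (lam i ω)⁻¹ * y i ω ^ 2)) with hf
  -- basic bounds
  have hlam2 : ∀ i ω, lam i ω ≤ 2 := fun i ω =>
    lam_le_two (hγ i ω).1 (hγ i ω).2 (hlam i ω).1 (hlam i ω).2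
  have hquad : ∀ i ω, y i ω - (lam i ω)⁻¹ * y i ω ^ 2 ≤ 1 / 2 := by
    intro i ω
    have hl0 := (hlam i ω).1
    have h2 := hlam2 i ω
    have h4 : 0 ≤ (lam i ω)⁻¹ * (y i ω - lam i ω / 2) ^ 2 := by positivity
    have hinv : (lam i ω)⁻¹ * (y i ω - lam i ω / 2) ^ 2 =
        (lam i ω)⁻¹ * y i ω ^ 2 - y i ω + lam i ω / 4 := by
      field_simp
      ring
    rw [hinv] at h4
    linarith
  have hindbdd : ∀ i ω, ‖ind i ω‖ ≤ 2 := by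
    intro i ω
    rw [hind]
    simp only [Set.indicator_apply, Set.mem_setOf_eq]
    split_ifs with h
    · rw [Real.norm_eq_abs, abs_le]
      constructor
      · linarith [h.1, (hγ i ω).2]
      · linarith [h.2, hlam2 i ω]
    · simp
  -- measurability of the indicator (w.r.t. m0)
  have hindmeas : ∀ i, 1 ≤ i → Measurable (ind i) := by
    intro i hi
    have my : Measurable (y i) := (hy i).mono (F.le i) le_rfl
    have mγ : Measurable (γ i) := ((hγmeas i hi).mono (F.le (i-1))).measurable
    have ml : Measurable (lam i) := ((hlammeas i hi).mono (F.le (i-1))).measurable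
    have hset : MeasurableSet {ω'' | -γ i ω'' ≤ y i ω'' ∧ y i ω'' < lam i ω''} := by
      have h1 : MeasurableSet {ω'' | -γ i ω'' ≤ y i ω''} := measurableSet_le mγ.neg my
      have h2 : MeasurableSet {ω'' | y i ω'' < lam i ω''} := measurableSet_lt my ml
      have : {ω'' | -γ i ω'' ≤ y i ω'' ∧ y i ω'' < lam i ω''} =
          {ω'' | -γ i ω'' ≤ y i ω''} ∩ {ω'' | y i ω'' < lam i ω''} := rfl
      rw [this]; exact h1.inter h2
    exact my.indicator hset
  have hindint : ∀ i, 1 ≤ i → Integrable (ind i) μ := fun i hi =>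
    ⟨(hindmeas i hi).stronglyMeasurable.aestronglyMeasurable,
      HasFiniteIntegral.of_bounded (C := 2) (Eventually.of_forall (hindbdd i))⟩
  -- bounds on conditional expectation
  have hmbdd : ∀ i, ∀ᵐ ω ∂μ, |m i ω| ≤ 2 := by
    intro i
    have h2 : ∀ᵐ ω ∂μ, |ind i ω| ≤ ((2 : NNReal) : ℝ) := by
      filter_upwards with ω using by
        have := hindbdd i ω; rw [Real.norm_eq_abs] at this; exact_mod_cast this
    have h3 : ∀ᵐ ω ∂μ, |(μ[fun ω' => ind i ω' | F (i - 1)]) ω| ≤ ((2 : NNReal) : ℝ) :=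
      ae_bdd_condExp_of_ae_bdd h2
    rw [hm]
    filter_upwards [h3] with ω hω
    exact_mod_cast hω
  have hmmeas : ∀ i, StronglyMeasurable[F (i - 1)] (m i) := fun i => stronglyMeasurable_condExp
  -- adaptedness of f
  have hadp : Adapted F f := by
    intro n
    apply Real.measurable_exp.comp
    apply Finset.measurable_sum
    intro i hi
    rw [Finset.mem_Icc] at hi
    have hi1n : i - 1 ≤ n := le_trans (Nat.sub_le i 1) hi.2
    have my : Measurable[F n] (y i) := (hy i).mono (F.mono hi.2) le_rfl
    have mm : Measurable[F n] (m i) := ((hmmeas i).mono (F.mono hi1n)).measurable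
    have ml : Measurable[F n] (lam i) := ((hlammeas i hi.1).mono (F.mono hi1n)).measurable
    exact (my.sub mm).sub (ml.inv.mul (my.pow_const 2))
  -- a.e. bound on f and integrability
  have hfbdd : ∀ n, ∀ᵐ ω ∂μ, ‖f n ω‖ ≤ Real.exp (n * (5/2)) := by
    intro n
    have hmb : ∀ᵐ ω ∂μ, ∀ i ∈ Finset.Icc 1 n, |m i ω| ≤ 2 := by
      rw [Filter.eventually_all_finset]
      exact fun i _ => hmbdd i
    filter_upwards [hmb] with ω hω
    rw [hf]
    simp only [Real.norm_eq_abs, Real.abs_exp, Real.exp_le_exp]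
    calc ∑ i ∈ Finset.Icc 1 n, (y i ω - m i ω - (lam i ω)⁻¹ * y i ω ^ 2)
        ≤ ∑ i ∈ Finset.Icc 1 n, (5/2 : ℝ) := by
          apply Finset.sum_le_sum
          intro i hi
          have h1 := hquad i ω
          have h2 := hω i hi
          have := abs_le.1 h2
          linarith
      _ ≤ n * (5/2) := by
          rw [Finset.sum_const, Nat.card_Icc]
          simp only [nsmul_eq_mul]
          have : ((n + 1 - 1 : ℕ) : ℝ) ≤ (n : ℝ) := by simp
          nlinarith [this]
  have hfint : ∀ n, Integrable (f n) μ := fun n =>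
    ⟨(((hadp n).mono (F.le n) le_rfl).aestronglyMeasurable),
      HasFiniteIntegral.of_bounded (hfbdd n)⟩
  -- the multiplicative increment
  set Z : ℕ → Ω → ℝ := fun i ω => Real.exp (y i ω - (lam i ω)⁻¹ * y i ω ^ 2) with hZ
  have hZbdd : ∀ i ω, ‖Z i ω‖ ≤ Real.exp (1/2) := by
    intro i ω
    rw [hZ]
    simp only [Real.norm_eq_abs, Real.abs_exp, Real.exp_le_exp]
    exact hquad i ω
  have hZmeas : ∀ i, 1 ≤ i → Measurable (Z i) := by
    intro i hi
    have my : Measurable (y i) := (hy i).mono (F.le i) le_rfl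
    have ml : Measurable (lam i) := ((hlammeas i hi).mono (F.le (i-1))).measurable
    exact Real.measurable_exp.comp (my.sub (ml.inv.mul (my.pow_const 2)))
  have hZint : ∀ i, 1 ≤ i → Integrable (Z i) μ := fun i hi =>
    ⟨(hZmeas i hi).stronglyMeasurable.aestronglyMeasurable,
      HasFiniteIntegral.of_bounded (Eventually.of_forall (hZbdd i))⟩
  have hZle : ∀ i ω, Z i ω ≤ 1 + ind i ω := by
    intro i ω
    rw [hZ, hind]
    simp only [Set.indicator_apply, Set.mem_setOf_eq]
    exact key_ineq (hγ i ω).1 (hγ i ω).2 (hlam i ω).1 (hlam i ω).2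
  -- the supermartingale condition
  have hcond : ∀ n, μ[f (n + 1) | F n] ≤ᵐ[μ] f n := by
    intro n
    have hn1 : 1 ≤ n + 1 := Nat.le_add_left 1 n
    set φ : Ω → ℝ := fun ω => f n ω * Real.exp (-(m (n+1) ω)) with hφ
    have hsplit : f (n + 1) = φ * Z (n+1) := by
      funext ω
      rw [hf, hφ, hZ]
      simp only [Pi.mul_apply]
      rw [Finset.sum_Icc_succ_top hn1, Real.exp_add,
        show y (n+1) ω - m (n+1) ω - (lam (n+1) ω)⁻¹ * y (n+1) ω ^ 2 =
          -(m (n+1) ω) + (y (n+1) ω - (lam (n+1) ω)⁻¹ * y (n+1) ω ^ 2) from by ring,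
        Real.exp_add]
      rw [hf]
      ring
    have hmn : StronglyMeasurable[F n] (m (n+1)) := hmmeas (n+1)
    have hφmeas : StronglyMeasurable[F n] φ := by
      rw [hφ]
      exact ((hadp n).mul
        (Real.measurable_exp.comp hmn.measurable.neg)).stronglyMeasurable
    have hφZint : Integrable (φ * Z (n+1)) μ := by
      refine ⟨((hφmeas.measurable.mono (F.le n) le_rfl).mul
        ((hZmeas (n+1) hn1))).stronglyMeasurable.aestronglyMeasurable, ?_⟩
      apply HasFiniteIntegral.of_bounded
        (C := Real.exp (n * (5/2)) * Real.exp 2 * Real.exp (1/2))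
      filter_upwards [hfbdd n, hmbdd (n+1)] with ω h1 h2
      rw [hφ]
      simp only [Pi.mul_apply, norm_mul]
      have e1 : ‖Real.exp (-(m (n+1) ω))‖ ≤ Real.exp 2 := by
        rw [Real.norm_eq_abs, Real.abs_exp, Real.exp_le_exp]
        have := abs_le.1 h2
        linarith
      have e2 := hZbdd (n+1) ω
      have p1 : (0:ℝ) ≤ ‖f n ω‖ := norm_nonneg _
      have p2 : (0:ℝ) ≤ ‖Real.exp (-(m (n+1) ω))‖ := norm_nonneg _
      have p3 : (0:ℝ) ≤ ‖Z (n+1) ω‖ := norm_nonneg _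
      calc ‖f n ω‖ * ‖Real.exp (-(m (n+1) ω))‖ * ‖Z (n+1) ω‖
          ≤ Real.exp (n * (5/2)) * Real.exp 2 * ‖Z (n+1) ω‖ := by
            apply mul_le_mul_of_nonneg_right _ p3
            exact mul_le_mul h1 e1 p2 (Real.exp_nonneg _)
        _ ≤ Real.exp (n * (5/2)) * Real.exp 2 * Real.exp (1/2) := by
            apply mul_le_mul_of_nonneg_left e2 (by positivity)
    have hmul : μ[φ * Z (n+1) | F n] =ᵐ[μ] φ * μ[Z (n+1) | F n] :=
      condExp_mul_of_stronglyMeasurable_left hφmeas hφZint (hZint (n+1) hn1)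
    have hone : Integrable ((fun _ => (1:ℝ)) + ind (n+1)) μ :=
      (integrable_const (1:ℝ)).add (hindint (n+1) hn1)
    have h1 : μ[Z (n+1) | F n] ≤ᵐ[μ] μ[(fun _ => (1:ℝ)) + ind (n+1) | F n] := by
      apply condExp_mono (hZint (n+1) hn1) hone
      exact Eventually.of_forall fun ω => hZle (n+1) ω
    have h2 : μ[(fun _ => (1:ℝ)) + ind (n+1) | F n] =ᵐ[μ] fun ω => 1 + m (n+1) ω := by
      refine (condExp_add (integrable_const (1:ℝ)) (hindint (n+1) hn1) _).trans ?_
      rw [condExp_const (F.le n) (1:ℝ), hm]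
      exact Eventually.of_forall fun ω => rfl
    have hkey : μ[f (n + 1) | F n] =ᵐ[μ] φ * μ[Z (n+1) | F n] := by
      rw [hsplit]; exact hmul
    filter_upwards [hkey, h1, h2, hmbdd (n+1)] with ω e1 e2 e3 _
    rw [e1]
    have hφ0 : 0 ≤ φ ω := by
      rw [hφ, hf]
      positivity
    have step1 : (φ * μ[Z (n+1) | F n]) ω ≤ φ ω * (1 + m (n+1) ω) := by
      simp only [Pi.mul_apply]
      apply mul_le_mul_of_nonneg_left _ hφ0
      calc (μ[Z (n+1) | F n]) ω ≤ (μ[(fun _ => (1:ℝ)) + ind (n+1) | F n]) ω := e2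
        _ = 1 + m (n+1) ω := e3
    have step2 : φ ω * (1 + m (n+1) ω) ≤ φ ω * Real.exp (m (n+1) ω) := by
      apply mul_le_mul_of_nonneg_left _ hφ0
      linarith [Real.add_one_le_exp (m (n+1) ω)]
    have step3 : φ ω * Real.exp (m (n+1) ω) = f n ω := by
      rw [hφ]
      show f n ω * Real.exp (-(m (n+1) ω)) * Real.exp (m (n+1) ω) = f n ω
      rw [mul_assoc, ← Real.exp_add, neg_add_cancel, Real.exp_zero, mul_one]
    calc (φ * μ[Z (n+1) | F n]) ω ≤ φ ω * (1 + m (n+1) ω) := step1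
      _ ≤ φ ω * Real.exp (m (n+1) ω) := step2
      _ = f n ω := step3
  constructor
  · exact supermartingale_nat (fun n => (hadp n).stronglyMeasurable) hfint hcond
  · show ∫ ω, f 1 ω ∂μ ≤ 1
    have h0 : f 0 = fun _ => (1:ℝ) := by
      funext ω; rw [hf]; simp
    calc ∫ ω, f 1 ω ∂μ = ∫ ω, (μ[f 1 | F 0]) ω ∂μ :=
          (integral_condExp (F.le 0) (f := f 1)).symm
      _ ≤ ∫ ω, f 0 ω ∂μ := integral_mono_ae integrable_condExp (hfint 0) (hcond 0)
      _ = 1 := by rw [h0]; simp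
end
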